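/- From every configuration x ∈ Z, the all-ones configuration is reachable by allowed up-flips: there exists a sequence x = w^0, w^1, …, w^m with w^m the all-ones vector such that for each k there is a vertex i_k with w^k_{i_k} = 0, n_{i_k,1}(w^k) ≥ n_{i_k,0}(w^k), and w^{k+1} = w^k + δ_{i_k}. -/
import Mathlib


open Finset

variable {V : Type*}

/-- Agreement of a configuration on an (unordered) edge. -/
def agreeFun (x : V → Bool) : Sym2 V → Bool :=
  Sym2.lift ⟨fun a b => x a == x b, fun a b => by show (x a == x b) = (x b == x a); cases x a <;> cases x b <;> rfl⟩

/-- The potential of the majority game: number of edges whose endpoints agree. -/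
def Phi [Fintype V] [DecidableEq V] (G : SimpleGraph V) [DecidableRel G.Adj]
    (x : V → Bool) : ℕ :=
  (G.edgeFinset.filter (fun e => agreeFun x e = true)).card

/-- Number of neighbors of `i` playing action `a` in configuration `x`. -/
def nCount [Fintype V] (G : SimpleGraph V) [DecidableRel G.Adj]
    (x : V → Bool) (i : V) (a : Bool) : ℕ :=
  ((G.neighborFinset i).filter (fun j => x j = a)).card

/-- Majority-game utility: number of neighbors agreeing with `i`. -/
def lamC [Fintype V] (G : SimpleGraph V) [DecidableRel G.Adj]
    (x : V → Bool) (i : V) : ℕ :=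
  ((G.neighborFinset i).filter (fun j => x j = x i)).card

/-- Minority-game utility: number of neighbors disagreeing with `i`. -/
def lamA [Fintype V] (G : SimpleGraph V) [DecidableRel G.Adj]
    (x : V → Bool) (i : V) : ℕ :=
  ((G.neighborFinset i).filter (fun j => x j ≠ x i)).card

/-- `x` is a Nash equilibrium of the minority game. -/
def MinorityNE [Fintype V] [DecidableEq V] (G : SimpleGraph V) [DecidableRel G.Adj]
    (x : V → Bool) : Prop :=
  ∀ (i : V) (a : Bool), lamA G (Function.update x i a) i ≤ lamA G x i

/-- A monotone crusade from `C`: starts at the indicator of `C`, ends at all-ones,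
and at each step one coordinate outside `C` is flipped from `0` to `1`. -/
def IsCrusade [DecidableEq V] (C : Finset V) (m : ℕ) (xs : ℕ → V → Bool) : Prop :=
  xs 0 = (fun v => decide (v ∈ C)) ∧ xs m = (fun _ => true) ∧
    ∀ k < m, ∃ i, i ∉ C ∧ xs k i = false ∧ xs (k + 1) = Function.update (xs k) i true

/-- `C` is a `Φ_c`-valid control set: there is a `Φ_c`-adapted monotone crusade from `C`. -/
def ValidControlSet [Fintype V] [DecidableEq V] (G : SimpleGraph V) [DecidableRel G.Adj]
    (C : Finset V) : Prop :=
  ∃ m xs, IsCrusade C m xs ∧ ∀ k < m, Phi G (xs k) ≤ Phi G (xs (k + 1))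

/-- `x ∈ Z`: reachable from the all-ones configuration by allowed down-flips. -/
def InZ [Fintype V] [DecidableEq V] (G : SimpleGraph V) [DecidableRel G.Adj]
    (x : V → Bool) : Prop :=
  ∃ m, ∃ ys : ℕ → V → Bool, ys 0 = (fun _ => true) ∧ ys m = x ∧
    ∀ k < m, ∃ i, ys k i = true ∧ nCount G (ys k) i false ≤ nCount G (ys k) i true ∧
      ys (k + 1) = Function.update (ys k) i false

/-- `‖x‖₁`: number of coordinates equal to `1`. -/
def norm1 [Fintype V] (x : V → Bool) : ℕ :=
  (Finset.univ.filter (fun v => x v = true)).card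


lemma nCount_update_self [Fintype V] [DecidableEq V] (G : SimpleGraph V) [DecidableRel G.Adj]
    (y : V → Bool) (i : V) (b a : Bool) :
    nCount G (Function.update y i b) i a = nCount G y i a := by
  unfold nCount
  congr 1
  apply Finset.filter_congr
  intro j hj
  have hji : j ≠ i := fun h => (G.notMem_neighborFinset_self i) (h ▸ hj)
  simp [Function.update_of_ne hji]

/-- from every configuration in `Z`, the all-ones configuration is
reachable by allowed up-flips. -/
theorem inZ_reach_allOnes [Fintype V] [DecidableEq V]
    (G : SimpleGraph V) [DecidableRel G.Adj] (x : V → Bool) (hx : InZ G x) :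
    ∃ m, ∃ ws : ℕ → V → Bool, ws 0 = x ∧ ws m = (fun _ => true) ∧
      ∀ k < m, ∃ i, ws k i = false ∧
        nCount G (ws k) i false ≤ nCount G (ws k) i true ∧
        ws (k + 1) = Function.update (ws k) i true := by
  obtain ⟨m, ys, h0, hm, hstep⟩ := hx
  refine ⟨m, fun k => ys (m - k), by simp [hm], by simp [h0], ?_⟩
  intro k hk
  have hj : m - k - 1 < m := by omega
  obtain ⟨i, hi1, hcnt, heq⟩ := hstep (m - k - 1) hj
  have hmk : m - k = (m - k - 1) + 1 := by omega
  have hmk1 : m - (k + 1) = m - k - 1 := by omega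
  refine ⟨i, ?_, ?_, ?_⟩
  · show ys (m - k) i = false
    rw [hmk, heq]; simp
  · show nCount G (ys (m-k)) i false ≤ nCount G (ys (m-k)) i true
    rw [hmk, heq, nCount_update_self, nCount_update_self]; exact hcnt
  · show ys (m - (k+1)) = Function.update (ys (m-k)) i true
    rw [hmk, hmk1, heq]
    funext v
    by_cases hv : v = i
    · subst hv; simp [hi1]
    · simp [Function.update_of_ne hv]
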